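/- For every n > t+1 with t ≥ 1, the weak saturation number of the star K_{1,t} satisfies wsat(n, K_{1,t}) = C(t,2). -/

import Mathlib

open SimpleGraph

/-- `G` contains a copy of `F`. -/
def ContainsCopy {W V : Type*} (F : SimpleGraph W) (G : SimpleGraph V) : Prop :=
  ∃ f : W ↪ V, ∀ a b, F.Adj a b → G.Adj (f a) (f b)

/-- One step of the weak saturation process: add one missing edge `e` so that the new
graph contains a copy of `F` through `e`. -/
def AddStep {W V : Type*} (F : SimpleGraph W) (G G' : SimpleGraph V) : Prop :=
  ∃ e, e ∉ G.edgeSet ∧ G'.edgeSet = insert e G.edgeSet ∧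
    ∃ f : W ↪ V, (∀ a b, F.Adj a b → G'.Adj (f a) (f b)) ∧
      ∃ a b, F.Adj a b ∧ s(f a, f b) = e

/-- `G` is weakly `F`-saturated. -/
def IsWeaklySaturated {W V : Type*} (F : SimpleGraph W) (G : SimpleGraph V) : Prop :=
  ¬ ContainsCopy F G ∧
  ∃ (m : ℕ) (c : ℕ → SimpleGraph V), c 0 = G ∧ c m = ⊤ ∧
    ∀ i < m, AddStep F (c i) (c (i + 1))

/-- The weak saturation number `wsat(n, F)`. -/
noncomputable def wsat {W : Type*} (n : ℕ) (F : SimpleGraph W) : ℕ :=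
  sInf {m | ∃ G : SimpleGraph (Fin n), IsWeaklySaturated F G ∧ G.edgeSet.ncard = m}

/-!
Upper bound: a clique on `t` vertices has maximum degree `t - 1`, so it contains no `K_{1,t}`,
and every missing edge can be added. As long as some clique vertex misses an edge, that edge
is added first: the clique vertex has degree `t - 1` beforehand. Afterwards every vertex is
joined to all `t` clique vertices, so any remaining edge completes a star.

Lower bound: in a saturation process `G = c 0, …, c m = K_n`, let `T v` be the first step at
which `v` has degree at least `t`, and order the vertices by `T` (ties broken arbitrarily).
An edge `vw` added before step `T v` completes a star centred at one of its endpoints; that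
endpoint cannot be `v`, so it is `w` and `T w < T v`. Hence in
`c (T v - 1)`, where `v` already has degree `t - 1`, every neighbour of `v` later in the order
is a neighbour in `G`. The `k`-th vertex thus has at least `t - 1 - k` edges of `G` to later
vertices, and `∑ₖ (t - 1 - k) = C(t, 2)`.
-/

open Finset Function

abbrev starK (t : ℕ) : SimpleGraph (Fin 1 ⊕ Fin t) := completeBipartiteGraph (Fin 1) (Fin t)

variable {V : Type*} {t : ℕ}

lemma Relation.ReflTransGen.exists_chain {α : Type*} {r : α → α → Prop} {a b : α}
    (h : Relation.ReflTransGen r a b) :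
    ∃ (m : ℕ) (c : ℕ → α), c 0 = a ∧ c m = b ∧ ∀ i < m, r (c i) (c (i + 1)) := by
  induction h using Relation.ReflTransGen.head_induction_on with
  | refl => exact ⟨0, fun _ => b, rfl, rfl, by simp⟩
  | head hac _ ih =>
    obtain ⟨m, c, h0, hm, hc⟩ := ih
    refine ⟨m + 1, fun | 0 => _ | i + 1 => c i, rfl, hm, ?_⟩
    rintro (_ | i) hi
    · simpa [h0] using hac
    · exact hc i (by omega)

lemma AddStep.lt {W : Type*} {F : SimpleGraph W} {G G' : SimpleGraph V} (h : AddStep F G G') :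
    G < G' := by
  obtain ⟨e, he, hins, -⟩ := h
  rw [← edgeSet_ssubset_edgeSet, hins]
  exact Set.ssubset_insert he

lemma reflTransGen_addStep_top [Finite V] {W : Type*} {F : SimpleGraph W}
    (P : SimpleGraph V → Prop) (hP : ∀ H, P H → H ≠ ⊤ → ∃ H', AddStep F H H' ∧ P H')
    {G : SimpleGraph V} (hG : P G) : Relation.ReflTransGen (AddStep F) G ⊤ := by
  induction G using WellFoundedGT.induction with
  | _ H ih =>
    by_cases hH : H = ⊤
    · rw [hH]
    · obtain ⟨H', hstep, hH'⟩ := hP H hG hH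
      exact .head hstep (ih H' hstep.lt hH')

section Star

variable {G : SimpleGraph V}

lemma exists_embedding_of_forall_adj {v : V} {S : Finset V} (hS : #S = t)
    (hadj : ∀ w ∈ S, G.Adj v w) :
    ∃ f : Fin 1 ⊕ Fin t ↪ V, (∀ a b, (starK t).Adj a b → G.Adj (f a) (f b)) ∧
      f (.inl 0) = v ∧ ∀ w ∈ S, ∃ i, f (.inr i) = w := by
  let e := equivFinOfCardEq hS
  let g : Fin t → V := fun i => e.symm i
  have hg : ∀ i, G.Adj v (g i) := fun i => hadj _ (e.symm i).2
  have hinj : Injective (Sum.elim (fun _ => v) g) :=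
    (injective_of_subsingleton fun _ : Fin 1 => v).sumElim
      (Subtype.val_injective.comp e.symm.injective) fun _ i => (hg i).ne
  refine ⟨⟨_, hinj⟩, ?_, rfl, fun w hw => ⟨e ⟨w, hw⟩, by simp [g]⟩⟩
  rintro (a | a) (b | b) hab
  · simp at hab
  · exact hg b
  · exact (hg a).symm
  · simp at hab

lemma addStep_sup_edge [DecidableEq V] (ht : 1 ≤ t) {u b : V} [Fintype (G.neighborSet u)]
    (hne : u ≠ b) (hn : ¬G.Adj u b) (hdeg : t ≤ G.degree u + 1) :
    AddStep (starK t) G (G ⊔ edge u b) := by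
  have hb : b ∉ G.neighborFinset u := by simpa using hn
  obtain ⟨S, hbS, hS, hcard⟩ := exists_subsuperset_card_eq
    (singleton_subset_iff.mpr (mem_insert_self b (G.neighborFinset u))) (by simpa using ht)
    (by rwa [card_insert_of_notMem hb, card_neighborFinset_eq_degree])
  have hadj : ∀ w ∈ S, (G ⊔ edge u b).Adj u w := by
    intro w hw
    rcases mem_insert.mp (hS hw) with rfl | hw
    · exact Or.inr ((edge_adj ..).mpr ⟨.inl ⟨rfl, rfl⟩, hne⟩)
    · exact Or.inl ((mem_neighborFinset ..).mp hw)
  obtain ⟨f, hf, hfu, hfS⟩ := exists_embedding_of_forall_adj hcard hadj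
  obtain ⟨i, hi⟩ := hfS b (singleton_subset_iff.mp hbS)
  refine ⟨s(u, b), hn, ?_, f, hf, .inl 0, .inr i, by simp, by rw [hfu, hi]⟩
  rw [edgeSet_sup, edgeSet_edge_of_ne hne, Set.union_singleton]

variable [Fintype V]

lemma le_degree_of_forall_adj [DecidableRel G.Adj] {f : Fin 1 ⊕ Fin t ↪ V}
    (hf : ∀ a b, (starK t).Adj a b → G.Adj (f a) (f b)) : t ≤ G.degree (f (.inl 0)) := by
  have hsub : univ.map (Embedding.inr.trans f) ⊆ G.neighborFinset (f (.inl 0)) := by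
    intro w hw
    obtain ⟨i, -, rfl⟩ := mem_map.mp hw
    exact (mem_neighborFinset _ _ _).mpr (hf _ _ (by simp))
  simpa using card_le_card hsub

lemma containsCopy_starK_iff [DecidableRel G.Adj] :
    ContainsCopy (starK t) G ↔ ∃ v, t ≤ G.degree v := by
  refine ⟨fun ⟨f, hf⟩ => ⟨_, le_degree_of_forall_adj hf⟩, fun ⟨v, hv⟩ => ?_⟩
  obtain ⟨S, hS, hcard⟩ := exists_subset_card_eq hv
  obtain ⟨f, hf, -⟩ := exists_embedding_of_forall_adj hcard fun w hw =>
    (G.mem_neighborFinset v w).mp (hS hw)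
  exact ⟨f, hf⟩

lemma AddStep.exists_sup_edge {G' : SimpleGraph V} [DecidableRel G'.Adj]
    (h : AddStep (starK t) G G') :
    ∃ u b, ¬G.Adj u b ∧ G' = G ⊔ edge u b ∧ t ≤ G'.degree u := by
  obtain ⟨e, he, hins, f, hf, a, b, hab, rfl⟩ := h
  have hG' : G' = G ⊔ edge (f a) (f b) := by
    rw [← edgeSet_inj, edgeSet_sup, edgeSet_edge_of_ne (f.injective.ne hab.ne), hins,
      Set.union_singleton]
  have hdeg := le_degree_of_forall_adj hf
  rcases a with a | a <;> rcases b with b | b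
  · simp at hab
  · obtain rfl := Subsingleton.elim a 0
    exact ⟨_, _, he, hG', hdeg⟩
  · obtain rfl := Subsingleton.elim b 0
    exact ⟨_, _, fun h => he h.symm, by rw [hG', edge_comm], hdeg⟩
  · simp at hab

lemma AddStep.degree_le_add_one {G' : SimpleGraph V} (h : AddStep (starK t) G G') (v : V)
    [Fintype (G.neighborSet v)] [Fintype (G'.neighborSet v)] : G'.degree v ≤ G.degree v + 1 := by
  classical
  obtain ⟨u, b, -, rfl, -⟩ := h.exists_sup_edge
  rw [← card_neighborFinset_eq_degree, ← card_neighborFinset_eq_degree, neighborFinset_sup]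
  refine (card_union_le _ _).trans (Nat.add_le_add_left ?_ _)
  rw [card_le_one]
  intro x hx y hy
  simp only [mem_neighborFinset, edge_adj] at hx hy
  grind

end Star

section Clique

variable [Fintype V] [DecidableEq V]

lemma degree_map_top_lt (ht : 1 ≤ t) (f : Fin t ↪ V) (v : V) :
    ((⊤ : SimpleGraph (Fin t)).map f).degree v < t := by
  rw [← card_neighborFinset_eq_degree]
  by_cases hv : v ∈ Set.range f
  · obtain ⟨x, rfl⟩ := hv
    have hsub : ((⊤ : SimpleGraph (Fin t)).map f).neighborFinset (f x) ⊆
        (univ.map f).erase (f x) := by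
      intro w hw
      obtain ⟨y, z, hyz, hy, rfl⟩ := (map_adj ..).mp ((mem_neighborFinset ..).mp hw)
      obtain rfl := f.injective hy
      simpa using hyz.symm
    calc _ ≤ #((univ.map f).erase (f x)) := card_le_card hsub
      _ < t := by
        rw [card_erase_of_mem (mem_map_of_mem f (mem_univ x)), card_map, card_univ,
          Fintype.card_fin]
        omega
  · have hempty : ((⊤ : SimpleGraph (Fin t)).map f).neighborFinset v = ∅ := by
      simp only [eq_empty_iff_forall_notMem, mem_neighborFinset, map_adj]
      rintro w ⟨x, -, -, rfl, -⟩
      exact hv ⟨x, rfl⟩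
    rw [hempty, card_empty]
    omega

lemma exists_addStep_of_map_top_le (ht : 1 ≤ t) (f : Fin t ↪ V) {H : SimpleGraph V}
    (hK : (⊤ : SimpleGraph (Fin t)).map f ≤ H) (hH : H ≠ ⊤) :
    ∃ H', AddStep (starK t) H H' ∧ (⊤ : SimpleGraph (Fin t)).map f ≤ H' := by
  classical
  obtain ⟨u, b, hub, hn, hu⟩ :
      ∃ u b, u ≠ b ∧ ¬H.Adj u b ∧ ∀ x, f x ≠ u → H.Adj u (f x) := by
    by_cases h : ∃ x b, f x ≠ b ∧ ¬H.Adj (f x) b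
    · obtain ⟨x, b, hxb, hn⟩ := h
      exact ⟨f x, b, hxb, hn, fun y hy =>
        hK ((map_adj ..).mpr ⟨x, y, fun h => hy (h ▸ rfl), rfl, rfl⟩)⟩
    · push Not at h
      obtain ⟨u, b, hub, hn⟩ : ∃ u b, u ≠ b ∧ ¬H.Adj u b := by
        by_contra! h'
        exact hH (eq_top_iff.mpr fun u b hub => h' u b hub)
      exact ⟨u, b, hub, hn, fun x hx => (h x u hx).symm⟩
  refine ⟨_, addStep_sup_edge ht hub hn ?_, hK.trans le_sup_left⟩
  have hsub : (univ.map f).erase u ⊆ H.neighborFinset u := by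
    intro w hw
    obtain ⟨hwu, hw⟩ := mem_erase.mp hw
    obtain ⟨x, -, rfl⟩ := mem_map.mp hw
    exact (mem_neighborFinset ..).mpr (hu x hwu)
  calc t ≤ #((univ.map f).erase u) + 1 := by
        have := pred_card_le_card_erase (s := univ.map f) (a := u)
        rw [card_map, card_univ, Fintype.card_fin] at this
        omega
    _ ≤ H.degree u + 1 := by
        rw [← card_neighborFinset_eq_degree]
        exact Nat.add_le_add_right (card_le_card hsub) 1

theorem isWeaklySaturated_map_top (ht : 1 ≤ t) (f : Fin t ↪ V) :
    IsWeaklySaturated (starK t) ((⊤ : SimpleGraph (Fin t)).map f) := by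
  refine ⟨fun h => ?_, (reflTransGen_addStep_top _
    (fun H hK hH => exists_addStep_of_map_top_le ht f hK hH) le_rfl).exists_chain⟩
  obtain ⟨v, hv⟩ := containsCopy_starK_iff.mp h
  exact (degree_map_top_lt ht f v).not_ge hv

lemma ncard_edgeSet_map_top (f : Fin t ↪ V) :
    ((⊤ : SimpleGraph (Fin t)).map f).edgeSet.ncard = t.choose 2 := by
  rw [← coe_edgeFinset, Set.ncard_coe_finset]
  convert card_edgeFinset_map f ⊤
  rw [card_edgeFinset_top_eq_card_choose_two, Fintype.card_fin]

end Clique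

section Counting

variable [Fintype V] {β : Type*} [LinearOrder β]

lemma sum_card_filter_lt_eq_sum_range {M : Type*} [AddCommMonoid M] {key : V → β}
    (hkey : Injective key) (g : ℕ → M) :
    ∑ v, g #{w | key w < key v} = ∑ k ∈ range (Fintype.card V), g k := by
  set rank : V → ℕ := fun v => #{w | key w < key v}
  have rank_lt_of_lt : ∀ {v w}, key v < key w → rank v < rank w := fun hvw =>
    card_lt_card <| (ssubset_iff_of_subset fun x hx => by
      simp only [mem_filter, mem_univ, true_and] at hx ⊢; exact hx.trans hvw).mpr
      ⟨_, by simpa using hvw, by simp⟩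
  have rank_inj : Injective rank := fun v w h => hkey <| by
    rcases lt_trichotomy (key v) (key w) with hlt | heq | hgt
    · exact absurd h (rank_lt_of_lt hlt).ne
    · exact heq
    · exact absurd h (rank_lt_of_lt hgt).ne'
  let r : V → Fin (Fintype.card V) := fun v =>
    ⟨rank v, card_lt_univ_of_notMem (x := v) (by simp)⟩
  have hr : Bijective r := (Fintype.bijective_iff_injective_and_card r).mpr
    ⟨fun v w h => rank_inj (congrArg Fin.val h), by simp⟩
  rw [← Fin.sum_univ_eq_sum_range]
  exact Fintype.sum_bijective r hr _ _ fun v => rfl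

lemma sum_card_filter_adj_lt_le_card_edgeFinset (G : SimpleGraph V) [DecidableRel G.Adj]
    (key : V → β) :
    ∑ v, #{w | G.Adj v w ∧ key v < key w} ≤ #G.edgeFinset := by
  calc ∑ v, #{w | G.Adj v w ∧ key v < key w}
      = #{p : V × V | G.Adj p.1 p.2 ∧ key p.1 < key p.2} := by
        simp only [card_filter]
        rw [← Fintype.sum_prod_type']
    _ ≤ #G.edgeFinset := by
        refine card_le_card_of_injOn (fun p => s(p.1, p.2)) (fun p hp => ?_) ?_
        · simpa using (mem_filter.mp hp).2.1
        · rintro ⟨a, b⟩ hab ⟨c, d⟩ hcd h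
          simp only [coe_filter, mem_univ, true_and, Set.mem_ofPred_eq] at hab hcd
          rcases Sym2.eq_iff.mp h with ⟨rfl, rfl⟩ | ⟨rfl, rfl⟩
          · rfl
          · exact absurd (hab.2.trans hcd.2) (lt_irrefl _)

lemma sum_range_sub_le_card_edgeFinset (G : SimpleGraph V) [DecidableRel G.Adj]
    {key : V → β} (hkey : Injective key) {d : ℕ} (H : V → SimpleGraph V)
    [∀ v, DecidableRel (H v).Adj]
    (hdeg : ∀ v, d ≤ (H v).degree v)
    (hH : ∀ v w, (H v).Adj v w → key v < key w → G.Adj v w) :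
    ∑ k ∈ range (Fintype.card V), (d - k) ≤ #G.edgeFinset := by
  have hsplit : ∀ v, d ≤ #{w | key w < key v} + #{w | G.Adj v w ∧ key v < key w} := by
    classical
    intro v
    refine (hdeg v).trans ?_
    rw [← card_neighborFinset_eq_degree]
    refine (card_le_card fun w hw => ?_).trans (card_union_le _ _)
    have hvw := (mem_neighborFinset ..).mp hw
    rcases lt_or_gt_of_ne (hkey.ne hvw.ne) with hlt | hlt
    · exact mem_union_right _ (by simpa using ⟨hH v w hvw hlt, hlt⟩)
    · exact mem_union_left _ (by simpa using hlt)
  rw [← sum_card_filter_lt_eq_sum_range hkey]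
  refine (sum_le_sum fun v _ => ?_).trans (sum_card_filter_adj_lt_le_card_edgeFinset G key)
  have := hsplit v
  omega

end Counting

lemma sum_range_pred_sub_eq_choose_two {N : ℕ} (h : t ≤ N) :
    ∑ k ∈ range N, (t - 1 - k) = t.choose 2 := by
  rw [← sum_subset (range_subset_range.mpr h) fun k _ hk => by
    simp only [mem_range, not_lt] at hk; omega,
    show ∑ k ∈ range t, (t - 1 - k) = ∑ k ∈ range t, k from
      sum_range_reflect (fun k => k) t,
    sum_range_id, Nat.choose_two_right]

section LowerBound

variable [Fintype V]

lemma adj_or_le_of_addStep_chain {m : ℕ} {c : ℕ → SimpleGraph V} [∀ i, DecidableRel (c i).Adj]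
    (hc : ∀ i < m, AddStep (starK t) (c i) (c (i + 1)))
    {T : V → ℕ} (hT : ∀ i v, t ≤ (c i).degree v → T v ≤ i) {i : ℕ} (hi : i ≤ m)
    {v w : V} (h : (c i).Adj v w) : (c 0).Adj v w ∨ T v ≤ i ∨ T w ≤ i := by
  induction i generalizing v w with
  | zero => exact .inl h
  | succ i ih =>
    obtain ⟨u, b, -, hci, hu⟩ := (hc i (by omega)).exists_sup_edge
    have hTu := hT _ _ hu
    rw [hci] at h
    rcases h with h | h
    · rcases ih (by omega) h with h | h | h
      · exact .inl h
      · exact .inr (.inl (by omega))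
      · exact .inr (.inr (by omega))
    · obtain ⟨⟨rfl, rfl⟩ | ⟨rfl, rfl⟩, -⟩ := (edge_adj ..).mp h
      · exact .inr (.inl hTu)
      · exact .inr (.inr hTu)

theorem choose_two_le_ncard_edgeSet (htV : t < Fintype.card V) {G : SimpleGraph V}
    (hG : IsWeaklySaturated (starK t) G) : t.choose 2 ≤ G.edgeSet.ncard := by
  classical
  obtain ⟨hfree, m, c, rfl, hm, hc⟩ := hG
  have hsat_top : ∀ v, t ≤ (c m).degree v := fun v => by
    have : (c m).degree v = Fintype.card V - 1 := by convert complete_graph_degree v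
    omega
  have hsat : ∀ v, ∃ i, t ≤ (c i).degree v := fun v => ⟨m, hsat_top v⟩
  let T v := Nat.find (hsat v)
  have hT : ∀ i v, t ≤ (c i).degree v → T v ≤ i := fun i v h => Nat.find_le h
  have hT_le : ∀ v, T v ≤ m := fun v => hT m v (hsat_top v)
  have hT_pos : ∀ v, 0 < T v := fun v => Nat.pos_of_ne_zero fun h0 =>
    hfree (containsCopy_starK_iff.mpr ⟨v, h0 ▸ Nat.find_spec (hsat v)⟩)
  let key v : ℕ ×ₗ Fin (Fintype.card V) := toLex (T v, Fintype.equivFin V v)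
  have hkey : Injective key := fun v w h =>
    (Fintype.equivFin V).injective (congrArg Prod.snd (toLex.injective h))
  have hdeg : ∀ v, t - 1 ≤ (c (T v - 1)).degree v := by
    intro v
    have hstep := (hc (T v - 1) (by have := hT_le v; have := hT_pos v; omega)).degree_le_add_one v
    rw [Nat.sub_add_cancel (hT_pos v)] at hstep
    have hspec : t ≤ (c (T v)).degree v := Nat.find_spec (hsat v)
    omega
  have hforward : ∀ v w, (c (T v - 1)).Adj v w → key v < key w → (c 0).Adj v w := by
    intro v w hvw hlt
    rcases adj_or_le_of_addStep_chain hc hT (by have := hT_le v; omega) hvw with h | h | h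
    · exact h
    · have := hT_pos v; omega
    · have : key w < key v := Prod.Lex.toLex_lt_toLex.mpr (.inl (by have := hT_pos v; omega))
      exact absurd (hlt.trans this) (lt_irrefl _)
  rw [← coe_edgeFinset, Set.ncard_coe_finset, ← sum_range_pred_sub_eq_choose_two htV.le]
  exact sum_range_sub_le_card_edgeFinset (c 0) hkey (fun v => c (T v - 1)) hdeg hforward

end LowerBound

/-- For every `n > t+1` with `t ≥ 1`, `wsat(n, K_{1,t}) = C(t,2)`. -/
theorem wsat_star (t n : ℕ) (ht : 1 ≤ t) (hn : t + 1 < n) :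
    wsat n (completeBipartiteGraph (Fin 1) (Fin t)) = t.choose 2 := by
  have hK := isWeaklySaturated_map_top (V := Fin n) ht (Fin.castLEEmb (by omega))
  refine le_antisymm (Nat.sInf_le ⟨_, hK, ncard_edgeSet_map_top _⟩)
    (le_csInf ⟨_, _, hK, rfl⟩ ?_)
  rintro _ ⟨G, hG, rfl⟩
  exact choose_two_le_ncard_edgeSet (by rw [Fintype.card_fin]; omega) hG
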